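/- Complement antichains exist (claim of Definition 10): For every N and every finite antichain Mn ⊆ ℕ^N (a finite set of pairwise ≤-incomparable vectors), there exists a finite set M̄ of extended energies in (ℕ∪{∞})^N such that for every extended energy e ∈ (ℕ∪{∞})^N: there exists f ∈ M̄ with e ≤ f if and only if there is no m ∈ Mn with m ≤ e. In other words, the downward closure of M̄ in (ℕ∪{∞})^N is exactly the complement of the upward closure of Mn in (ℕ∪{∞})^N. -/

import Mathlib

/-! ### Energies and energy updates -/

/-- (Finite) energies: vectors in `ℕ^N`. -/
abbrev Energy (N : ℕ) := Fin N → ℕ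

/-- Extended energies: vectors in `(ℕ ∪ {∞})^N`. -/
abbrev EnergyE (N : ℕ) := Fin N → ℕ∞

/-- Embedding of energies into extended energies. -/
def Energy.toE {N : ℕ} (e : Energy N) : EnergyE N := fun k => (e k : ℕ∞)

/-- A component of an energy update: `-1`, `0`, or `min_D`. -/
inductive UpdComp (N : ℕ) : Type where
  | dec : UpdComp N
  | zero : UpdComp N
  | minOf (D : Finset (Fin N)) : UpdComp N
deriving DecidableEq

/-- An energy update: a vector of update components, where a `min_D`
component at index `k` must satisfy `k ∈ D`. -/
structure EnergyUpdate (N : ℕ) : Type where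
  comp : Fin N → UpdComp N
  valid : ∀ k D, comp k = UpdComp.minOf D → k ∈ D

open Classical in
/-- Applying an energy update to an extended energy: component `k` becomes
`e k - 1`, `e k`, or `min_{d ∈ D} e d`; the result is undefined (`none`) if
some component would become negative. -/
noncomputable def applyUpdE {N : ℕ} (e : EnergyE N) (u : EnergyUpdate N) :
    Option (EnergyE N) :=
  if ∀ k, u.comp k = UpdComp.dec → e k ≠ 0 then
    some (fun k =>
      match u.comp k with
      | UpdComp.dec => e k - 1
      | UpdComp.zero => e k
      | UpdComp.minOf D => (insert k D).inf' (Finset.insert_nonempty k D) e)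
  else none

open Classical in
/-- Applying an energy update to a (finite) energy. -/
noncomputable def applyUpdN {N : ℕ} (e : Energy N) (u : EnergyUpdate N) :
    Option (Energy N) :=
  if ∀ k, u.comp k = UpdComp.dec → e k ≠ 0 then
    some (fun k =>
      match u.comp k with
      | UpdComp.dec => e k - 1
      | UpdComp.zero => e k
      | UpdComp.minOf D => (insert k D).inf' (Finset.insert_nonempty k D) e)
  else none

/-! ### Declining energy games -/

/-- A declining `N`-dimensional energy game: positions (partitioned into defender
positions and attacker positions), moves, and a weight function assigning an
energy update to each move. -/
structure EnergyGame (N : ℕ) where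
  Pos : Type
  defender : Pos → Prop
  move : Pos → Pos → Prop
  weight : Pos → Pos → EnergyUpdate N

/-- The attacker wins from position `g` with (extended) initial energy budget `e`:
inductive (attractor) characterization of the existence of an attacker winning
strategy.  (The attacker wins exactly the finite plays that get stuck at a defender
position without the energy having become negative, so the attacker has a winning
strategy iff they can force the play into a stuck defender position in finitely
many steps while keeping all energy levels defined.) -/
inductive AttackerWins {N : ℕ} (G : EnergyGame N) : G.Pos → EnergyE N → Prop where
  | attack {g g' : G.Pos} {e e' : EnergyE N} :
      ¬ G.defender g → G.move g g' →
      applyUpdE e (G.weight g g') = some e' →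
      AttackerWins G g' e' → AttackerWins G g e
  | defend {g : G.Pos} {e : EnergyE N} :
      G.defender g →
      (∀ g', G.move g g' → (applyUpdE e (G.weight g g')).isSome) →
      (∀ g' e', G.move g g' → applyUpdE e (G.weight g g') = some e' →
        AttackerWins G g' e') →
      AttackerWins G g e

/-- **Complement antichains exist** (claim of Definition 10): for every finite
antichain `Mn ⊆ ℕ^N` there is a finite set `M̄` of extended energies whose downward
closure in `(ℕ∪{∞})^N` is exactly the complement of the upward closure of `Mn`. -/
theorem complement_antichain_exists (N : ℕ) (Mn : Set (Energy N))
    (hfin : Mn.Finite) (hanti : ∀ a ∈ Mn, ∀ b ∈ Mn, a ≤ b → a = b) :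
    ∃ Mbar : Set (EnergyE N), Mbar.Finite ∧
      ∀ e : EnergyE N, (∃ f ∈ Mbar, e ≤ f) ↔ ¬ ∃ m ∈ Mn, m.toE ≤ e := by
  classical
  set F := hfin.toFinset with hF
  set S : Fin N → Set ℕ∞ :=
    fun k => {⊤} ∪ (fun m : Energy N => ((m k - 1 : ℕ) : ℕ∞)) '' Mn with hS
  refine ⟨{f | (∀ k, f k ∈ S k) ∧ ¬ ∃ m ∈ Mn, m.toE ≤ f}, ?_, ?_⟩
  · have hpi : (Set.pi Set.univ S).Finite :=
      Set.Finite.pi (fun k => (Set.finite_singleton ⊤).union (hfin.image _))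
    exact hpi.subset (fun f hf k _ => hf.1 k)
  · intro e
    constructor
    · rintro ⟨f, ⟨_, hnf⟩, hef⟩ ⟨m, hm, hme⟩
      exact hnf ⟨m, hm, le_trans hme hef⟩
    · intro hne
      have h : ∀ m : F, ∃ k, e k < ((m : Energy N) k : ℕ∞) := by
        intro m
        by_contra hcon
        push_neg at hcon
        exact hne ⟨m, hfin.mem_toFinset.mp m.2, fun k => hcon k⟩
      choose c hc using h
      set T : Fin N → Finset ℕ :=
        fun k => (F.attach.filter (fun m => c m = k)).image
          (fun m => m.1 k - 1) with hT
      set f : EnergyE N :=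
        fun k => if h : (T k).Nonempty then (((T k).min' h : ℕ) : ℕ∞) else ⊤ with hf
      have key : ∀ k (hk : (T k).Nonempty), f k = (((T k).min' hk : ℕ) : ℕ∞) := by
        intro k hk; simp only [hf, dif_pos hk]
      refine ⟨f, ⟨?_, ?_⟩, ?_⟩
      · intro k
        by_cases hk : (T k).Nonempty
        · rcases Finset.mem_image.mp (Finset.min'_mem (T k) hk) with ⟨m, hmm, hmk⟩
          right
          refine ⟨m.1, hfin.mem_toFinset.mp m.2, ?_⟩
          show ((m.1 k - 1 : ℕ) : ℕ∞) = f k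
          rw [key k hk, hmk]
        · left; simp [hf, dif_neg hk]
      · rintro ⟨m', hm', hle⟩
        set m : F := ⟨m', hfin.mem_toFinset.mpr hm'⟩ with hm
        set k := c m with hck
        have hmem : m' k - 1 ∈ T k := by
          apply Finset.mem_image.mpr
          exact ⟨m, Finset.mem_filter.mpr ⟨Finset.mem_attach _ _, rfl⟩, rfl⟩
        have hk : (T k).Nonempty := ⟨_, hmem⟩
        have h1 : f k ≤ ((m' k - 1 : ℕ) : ℕ∞) := by
          rw [key k hk]
          exact_mod_cast Finset.min'_le _ _ hmem
        have hlt : e k < ((m' k : ℕ) : ℕ∞) := hc m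
        have hpos : 0 < m' k := by
          have h0 : (0 : ℕ∞) < ((m' k : ℕ) : ℕ∞) := lt_of_le_of_lt zero_le hlt
          exact_mod_cast h0
        have h2 : ((m' k - 1 : ℕ) : ℕ∞) < ((m' k : ℕ) : ℕ∞) := by
          exact_mod_cast Nat.sub_lt hpos one_pos
        exact absurd (hle k) (not_le.mpr (lt_of_le_of_lt h1 h2))
      · intro k
        by_cases hk : (T k).Nonempty
        · rw [key k hk]
          rcases Finset.mem_image.mp (Finset.min'_mem (T k) hk) with ⟨m, hmm, hmk⟩
          have hcm : c m = k := by
            simpa using (Finset.mem_filter.mp hmm).2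
          have hlt : e k < ((m.1 k : ℕ) : ℕ∞) := by
            have := hc m; rwa [hcm] at this
          have hne' : e k ≠ ⊤ := ne_top_of_lt hlt
          obtain ⟨n, hn⟩ : ∃ n : ℕ, e k = (n : ℕ∞) :=
            ⟨(e k).toNat, (ENat.coe_toNat hne').symm⟩
          rw [hn] at hlt ⊢
          rw [← hmk]
          have : n < m.1 k := by exact_mod_cast hlt
          exact ENat.coe_le_coe.mpr (Nat.le_sub_one_of_lt this)
        · simp [hf, dif_neg hk]
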